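/- (Proposition 2.) Let Z_1,…,Z_N be independent square-integrable real random variables with means μ_i = E[Z_i] and variances v_i = Var(Z_i). Among all partitions of {1,…,N} into H strata D_1,…,D_H each of size N_h ≥ 2, a partition minimizes the expected within-strata weighted variance E[Σ_{h=1}^H (N_h/N) S²_{Z_h}] (equivalently, the expected design variance of the Horvitz–Thompson estimator under stratified simple random sampling with proportional allocation, which equals ((1−f)/n) E[Σ_h (N_h/N) S²_{Z_h}]) if and only if it minimizes Σ_{h=1}^H (N_h/N) S²_{μ,h}, the corresponding weighted within-strata variance of the means μ_1,…,μ_N. -/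

import Mathlib

/-!
For every stratum `D` of size `n ≥ 2`, expanding the squared deviations and using
`E[Z²] = Var Z + (E Z)²` together with additivity of variance over independent summands gives
`E[S²_Z] = S²_μ + (1/n) ∑_{i ∈ D} v_i`. Weighting by `n/N` and summing over the strata, the
variance terms add up to `(1/N) ∑_i v_i`, which does not depend on the partition. So the two
objectives differ by a constant and have the same minimizers.
-/

open MeasureTheory ProbabilityTheory Finset
open scoped Classical

theorem sum_sq_sub_mean {ι : Type*} (s : Finset ι) (x : ι → ℝ) :
    ∑ i ∈ s, (x i - (1 / (#s : ℝ)) * ∑ j ∈ s, x j) ^ 2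
      = ∑ i ∈ s, x i ^ 2 - (1 / (#s : ℝ)) * (∑ j ∈ s, x j) ^ 2 := by
  rcases s.eq_empty_or_nonempty with rfl | hs
  · simp
  have hcard : (#s : ℝ) ≠ 0 := by positivity
  simp only [sub_sq, sum_add_distrib, sum_sub_distrib, ← sum_mul, ← mul_sum, sum_const,
    nsmul_eq_mul]
  field_simp
  ring

theorem integral_sq_eq_variance_add_sq {Ω : Type*} [MeasurableSpace Ω] {P : Measure Ω}
    [IsProbabilityMeasure P] {X : Ω → ℝ} (hX : MemLp X 2 P) :
    ∫ ω, X ω ^ 2 ∂P = variance X P + (∫ ω, X ω ∂P) ^ 2 := by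
  rw [variance_eq_sub hX]
  simp only [Pi.pow_apply]
  ring

section Strata

variable {Ω ι : Type*} [MeasurableSpace Ω] {P : Measure Ω} [IsProbabilityMeasure P]
  {Z : ι → Ω → ℝ}

theorem integral_sum_sq_sub_mean (s : Finset ι) (hL2 : ∀ i ∈ s, MemLp (Z i) 2 P)
    (hindep : Set.Pairwise ↑s fun i j => IndepFun (Z i) (Z j) P) :
    ∫ ω, ∑ i ∈ s, (Z i ω - (1 / (#s : ℝ)) * ∑ j ∈ s, Z j ω) ^ 2 ∂P
      = ∑ i ∈ s, (∫ ω, Z i ω ∂P - (1 / (#s : ℝ)) * ∑ j ∈ s, ∫ ω, Z j ω ∂P) ^ 2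
        + ((#s - 1) / #s) * ∑ i ∈ s, variance (Z i) P := by
  rcases s.eq_empty_or_nonempty with rfl | hs
  · simp
  have hsum : MemLp (fun ω => ∑ j ∈ s, Z j ω) 2 P := memLp_finsetSum s hL2
  have hsum_var : variance (fun ω => ∑ j ∈ s, Z j ω) P = ∑ j ∈ s, variance (Z j) P := by
    rw [← IndepFun.variance_sum hL2 hindep]
    congr 1
    ext ω
    simp
  have hsum_mean : ∫ ω, ∑ j ∈ s, Z j ω ∂P = ∑ j ∈ s, ∫ ω, Z j ω ∂P :=
    integral_finsetSum s fun i hi => (hL2 i hi).integrable one_le_two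
  have hdev : ∫ ω, ∑ i ∈ s, (Z i ω - (1 / (#s : ℝ)) * ∑ j ∈ s, Z j ω) ^ 2 ∂P
      = ∑ i ∈ s, ∫ ω, Z i ω ^ 2 ∂P - (1 / (#s : ℝ)) * ∫ ω, (∑ j ∈ s, Z j ω) ^ 2 ∂P := by
    simp only [sum_sq_sub_mean]
    rw [integral_sub (integrable_finsetSum s fun i hi => (hL2 i hi).integrable_sq)
        (hsum.integrable_sq.const_mul _),
      integral_finsetSum s fun i hi => (hL2 i hi).integrable_sq, integral_const_mul]
  have hcard : (#s : ℝ) ≠ 0 := by positivity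
  rw [hdev, integral_sq_eq_variance_add_sq hsum, hsum_var, hsum_mean, sum_sq_sub_mean,
    sum_congr rfl fun i hi => integral_sq_eq_variance_add_sq (hL2 i hi), sum_add_distrib]
  field_simp
  ring

theorem integral_sampleVariance (s : Finset ι) (hs : 1 < #s) (hL2 : ∀ i ∈ s, MemLp (Z i) 2 P)
    (hindep : Set.Pairwise ↑s fun i j => IndepFun (Z i) (Z j) P) :
    ∫ ω, 1 / ((#s : ℝ) - 1) * ∑ i ∈ s, (Z i ω - (1 / (#s : ℝ)) * ∑ j ∈ s, Z j ω) ^ 2 ∂P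
      = 1 / ((#s : ℝ) - 1) *
          ∑ i ∈ s, (∫ ω, Z i ω ∂P - (1 / (#s : ℝ)) * ∑ j ∈ s, ∫ ω, Z j ω ∂P) ^ 2
        + 1 / (#s : ℝ) * ∑ i ∈ s, variance (Z i) P := by
  have hs' : (1 : ℝ) < #s := by exact_mod_cast hs
  have hcard : (#s : ℝ) - 1 ≠ 0 := by linarith
  rw [integral_const_mul, integral_sum_sq_sub_mean s hL2 hindep]
  field_simp

theorem integral_weighted_within_strata_variance {κ : Type*} [Fintype ι] [Fintype κ]
    [DecidableEq κ] (st : ι → κ) (c : ℝ) (hst : ∀ h, 1 < #{i | st i = h})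
    (hL2 : ∀ i, MemLp (Z i) 2 P) (hindep : Pairwise fun i j => IndepFun (Z i) (Z j) P) :
    ∫ ω, ∑ h, (#{i | st i = h} : ℝ) / c * (1 / ((#{i | st i = h} : ℝ) - 1) *
        ∑ i with st i = h, (Z i ω - (1 / (#{i | st i = h} : ℝ)) *
          ∑ j with st j = h, Z j ω) ^ 2) ∂P
      = ∑ h, (#{i | st i = h} : ℝ) / c * (1 / ((#{i | st i = h} : ℝ) - 1) *
          ∑ i with st i = h, (∫ ω, Z i ω ∂P - (1 / (#{i | st i = h} : ℝ)) *
            ∑ j with st j = h, ∫ ω, Z j ω ∂P) ^ 2)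
        + 1 / c * ∑ i, variance (Z i) P := by
  have hint : ∀ (s : Finset ι) (a : ℝ),
      Integrable (fun ω => ∑ i ∈ s, (Z i ω - a * ∑ j ∈ s, Z j ω) ^ 2) P := fun s a =>
    integrable_finsetSum s fun i _ =>
      ((hL2 i).sub ((memLp_finsetSum s fun j _ => hL2 j).const_mul a)).integrable_sq
  rw [integral_finsetSum univ fun h _ => ((hint _ _).const_mul _).const_mul _]
  have hstratum : ∀ h, (#{i | st i = h} : ℝ) / c * (1 / (#{i | st i = h} : ℝ) *
      ∑ i with st i = h, variance (Z i) P) = 1 / c * ∑ i with st i = h, variance (Z i) P := by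
    intro h
    have hcard : (#{i | st i = h} : ℝ) ≠ 0 := by
      have := hst h
      positivity
    field_simp
  simp only [integral_const_mul, integral_sampleVariance _ (hst _) (fun i _ => hL2 i)
    (fun i _ j _ hij => hindep hij), mul_add, sum_add_distrib, hstratum, ← mul_sum,
    sum_fiberwise]

end Strata

theorem forall_le_iff_of_eq_add_const {α β : Type*} [AddCommMonoid β] [PartialOrder β]
    [IsOrderedCancelAddMonoid β] {f g : α → β} {p : α → Prop} {c : β}
    (h : ∀ x, p x → f x = g x + c) {a : α} (ha : p a) :
    (∀ x, p x → f a ≤ f x) ↔ (∀ x, p x → g a ≤ g x) := by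
  refine forall₂_congr fun x hx => ?_
  rw [h a ha, h x hx, add_le_add_iff_right]

theorem kmeans_on_means_optimal_stratification_general
    {Ω : Type*} [MeasurableSpace Ω] (P : Measure Ω) [IsProbabilityMeasure P]
    (N H : ℕ)
    (Z : Fin N → Ω → ℝ)
    (hL2 : ∀ i, MemLp (Z i) 2 P)
    (hindep : iIndepFun Z P) :
    (let Dh : (Fin N → Fin H) → Fin H → Finset (Fin N) :=
       fun st h => univ.filter (fun i => st i = h)
     let Nh : (Fin N → Fin H) → Fin H → ℕ := fun st h => (Dh st h).card
     let Good : (Fin N → Fin H) → Prop := fun st => ∀ h, 2 ≤ Nh st h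
     let μZ : Fin N → ℝ := fun i => ∫ ω, Z i ω ∂P
     -- expected within-strata weighted sample variance of the Z's
     let EW : (Fin N → Fin H) → ℝ := fun st =>
       ∫ ω, (∑ h, ((Nh st h : ℝ) / N) *
         ((1 / ((Nh st h : ℝ) - 1)) *
           ∑ i ∈ Dh st h, (Z i ω - (1 / (Nh st h : ℝ)) * ∑ j ∈ Dh st h, Z j ω) ^ 2)) ∂P
     -- within-strata weighted variance of the means
     let B : (Fin N → Fin H) → ℝ := fun st =>
       ∑ h, ((Nh st h : ℝ) / N) *
         ((1 / ((Nh st h : ℝ) - 1)) *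
           ∑ i ∈ Dh st h, (μZ i - (1 / (Nh st h : ℝ)) * ∑ j ∈ Dh st h, μZ j) ^ 2)
     ∀ st, Good st →
       ((∀ st', Good st' → EW st ≤ EW st') ↔ (∀ st', Good st' → B st ≤ B st'))) := by
  intro Dh Nh Good μZ EW B st hst
  have hEW : ∀ st, Good st → EW st = B st + 1 / (N : ℝ) * ∑ i, variance (Z i) P :=
    fun st hst => integral_weighted_within_strata_variance st N hst hL2
      fun _ _ hij => hindep.indepFun hij
  exact forall_le_iff_of_eq_add_const hEW hst

/-- Proposition 2: Among all partitions of `{1,…,N}` into `H` strata of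
size ≥ 2 (fibers of `st : Fin N → Fin H`), a partition minimizes the expected
within-strata weighted variance `E[∑_h (N_h/N) S²_{Z_h}]` (equivalently, the expected
design variance of the Horvitz–Thompson estimator under stratified simple random
sampling with proportional allocation, which is `((1-f)/n)` times it) if and only if it
minimizes `∑_h (N_h/N) S²_{μ,h}`, the weighted within-strata variance of the means. -/
theorem kmeans_on_means_optimal_stratification
    {Ω : Type*} [MeasurableSpace Ω] (P : Measure Ω) [IsProbabilityMeasure P]
    (N H : ℕ)
    (Z : Fin N → Ω → ℝ)
    (hmeas : ∀ i, Measurable (Z i))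
    (hL2 : ∀ i, MemLp (Z i) 2 P)
    (hindep : iIndepFun Z P) :
    (let Dh : (Fin N → Fin H) → Fin H → Finset (Fin N) :=
       fun st h => univ.filter (fun i => st i = h)
     let Nh : (Fin N → Fin H) → Fin H → ℕ := fun st h => (Dh st h).card
     let Good : (Fin N → Fin H) → Prop := fun st => ∀ h, 2 ≤ Nh st h
     let μZ : Fin N → ℝ := fun i => ∫ ω, Z i ω ∂P
     -- expected within-strata weighted sample variance of the Z's
     let EW : (Fin N → Fin H) → ℝ := fun st =>
       ∫ ω, (∑ h, ((Nh st h : ℝ) / N) *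
         ((1 / ((Nh st h : ℝ) - 1)) *
           ∑ i ∈ Dh st h, (Z i ω - (1 / (Nh st h : ℝ)) * ∑ j ∈ Dh st h, Z j ω) ^ 2)) ∂P
     -- within-strata weighted variance of the means
     let B : (Fin N → Fin H) → ℝ := fun st =>
       ∑ h, ((Nh st h : ℝ) / N) *
         ((1 / ((Nh st h : ℝ) - 1)) *
           ∑ i ∈ Dh st h, (μZ i - (1 / (Nh st h : ℝ)) * ∑ j ∈ Dh st h, μZ j) ^ 2)
     ∀ st, Good st →
       ((∀ st', Good st' → EW st ≤ EW st') ↔ (∀ st', Good st' → B st ≤ B st'))) :=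
  kmeans_on_means_optimal_stratification_general P N H Z hL2 hindep
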